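/- Let 𝒲, 𝒴_1, …, 𝒴_n, 𝒞 be finite nonempty types. Let μ be a pmf on 𝒲; for each t ∈ {1,…,n} and each w ∈ 𝒲 let κ_t(·|w) be a pmf on 𝒴_t; and for each (w,y) ∈ 𝒲 × Π_t 𝒴_t let ν(·|w,y) be a pmf on 𝒞. Consider the joint pmf q(w,y,c) = μ(w) · ( Π_{t=1}^n κ_t(y_t|w) ) · ν(c|w,y), so that Y_1, …, Y_n are conditionally independent given W. Then the conditional mutual informations induced by q satisfy I( C ; (Y_1,…,Y_n) | W ) ≥ Σ_{t=1}^n I( C ; Y_t | W ). -/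

import Mathlib

open scoped Classical

/-- Probability of an event under a finitely supported distribution. -/
noncomputable def prOf {Ω : Type*} [Fintype Ω] (q : Ω → ℝ) (s : Set Ω) : ℝ :=
  ∑ ω, if ω ∈ s then q ω else 0

/-- Conditional mutual information `I(f(ω); g(ω) | h(ω))` of the random
variables `f`, `g`, `h` under the joint pmf `q` on the finite sample space `Ω`:
`∑_{a,b,c} q(a,b,c) log( q(a,b,c) q_C(c) / (q_{AC}(a,c) q_{BC}(b,c)) )`,
written as a sum over `ω` (terms with `q ω = 0` contribute `0`). -/
noncomputable def condMI {Ω A B C : Type*} [Fintype Ω]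
    (q : Ω → ℝ) (f : Ω → A) (g : Ω → B) (h : Ω → C) : ℝ :=
  ∑ ω, q ω * Real.log
    ((prOf q {ω' | f ω' = f ω ∧ g ω' = g ω ∧ h ω' = h ω} *
        prOf q {ω' | h ω' = h ω}) /
      (prOf q {ω' | f ω' = f ω ∧ h ω' = h ω} *
        prOf q {ω' | g ω' = g ω ∧ h ω' = h ω}))

/-! Under conditional independence of the `Yₜ` given `W`, the `W`-marginals cancel and
`I(C; Y | W) - ∑ₜ I(C; Yₜ | W)` becomes the relative entropy of `q` with respect to
`p(w, y, c) = q(w, c) ∏ₜ q(yₜ | w, c)`. Summing out `y` coordinatewise shows that `p` has the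
same total mass as `q`, so Gibbs' inequality makes this relative entropy nonnegative. -/

open Finset Real

lemma sub_le_mul_log_div {a b : ℝ} (ha : 0 ≤ a) (hb : 0 ≤ b) (hab : 0 < a → 0 < b) :
    a - b ≤ a * log (a / b) := by
  rcases ha.eq_or_lt with rfl | ha
  · simpa using hb
  · have hb := hab ha
    have := one_sub_inv_le_log_of_pos (div_pos ha hb)
    rw [inv_div] at this
    have := mul_le_mul_of_nonneg_left this ha.le
    rwa [mul_sub, mul_one, mul_div_cancel₀ _ ha.ne'] at this

section prOf
variable {Ω : Type*} [Fintype Ω] {q : Ω → ℝ}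

lemma prOf_nonneg (hq : ∀ ω, 0 ≤ q ω) (s : Set Ω) : 0 ≤ prOf q s :=
  sum_nonneg fun ω _ => by split_ifs <;> simp [hq]

lemma le_prOf_of_mem (hq : ∀ ω, 0 ≤ q ω) {s : Set Ω} {ω : Ω} (hω : ω ∈ s) :
    q ω ≤ prOf q s := by
  have := single_le_sum (f := fun ω' => if ω' ∈ s then q ω' else 0)
    (fun ω' _ => by split_ifs <;> simp [hq]) (mem_univ ω)
  simpa [prOf, hω] using this

lemma prOf_pos_of_mem (hq : ∀ ω, 0 ≤ q ω) {s : Set Ω} {ω : Ω} (hω : ω ∈ s)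
    (hqω : 0 < q ω) : 0 < prOf q s :=
  hqω.trans_le (le_prOf_of_mem hq hω)

lemma prOf_singleton (ω : Ω) : prOf q {ω} = q ω := by
  simp [prOf]

lemma prOf_univ : prOf q Set.univ = ∑ ω, q ω := by
  simp [prOf]

lemma sum_prOf_fiber {Z : Type*} [Fintype Z] (g : Ω → Z) {s : Z → Set Ω} {t : Set Ω}
    (hs : ∀ z ω, ω ∈ s z ↔ g ω = z ∧ ω ∈ t) :
    ∑ z, prOf q (s z) = prOf q t := by
  unfold prOf
  rw [sum_comm]
  refine sum_congr rfl fun ω _ => ?_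
  simp [hs, ite_and]

lemma sum_mul_log_div_nonneg {p : Ω → ℝ} (hq : ∀ ω, 0 ≤ q ω) (hp : ∀ ω, 0 ≤ p ω)
    (hqp : ∀ ω, 0 < q ω → 0 < p ω) (hsum : ∑ ω, p ω = ∑ ω, q ω) :
    0 ≤ ∑ ω, q ω * log (q ω / p ω) :=
  calc (0 : ℝ) = ∑ ω, (q ω - p ω) := by rw [sum_sub_distrib, hsum, sub_self]
    _ ≤ _ := sum_le_sum fun ω _ => sub_le_mul_log_div (hq ω) (hp ω) (hqp ω)

end prOf

section prod
variable {A B : Type*} [Fintype A] [Fintype B]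

lemma prOf_setOf_fst (q : A × B → ℝ) (P : A → Prop) :
    prOf q {x | P x.1} = ∑ a, if P a then ∑ b, q (a, b) else 0 := by
  unfold prOf
  rw [Fintype.sum_prod_type]
  refine sum_congr rfl fun a _ => ?_
  by_cases h : P a <;> simp [h]

lemma prOf_setOf_and_fst_eq (q : A × B → ℝ) (P : B → Prop) (a : A) :
    prOf q {x | P x.2 ∧ x.1 = a} = prOf (fun b => q (a, b)) {b | P b} := by
  unfold prOf
  rw [Fintype.sum_prod_type, sum_eq_single a]
  · simp
  · intro a' _ ha'
    exact sum_eq_zero fun b _ => if_neg fun h => ha' h.2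
  · simp

end prod

lemma sum_pi_ite_apply_eq_of_sum_eq_one {ι : Type*} [Fintype ι] [DecidableEq ι]
    {X : ι → Type*} [∀ i, Fintype (X i)] {f : ∀ i, X i → ℝ} (hf : ∀ i, ∑ x, f i x = 1)
    (i : ι) (z : X i) :
    ∑ x : ∀ j, X j, (if x i = z then ∏ j, f j (x j) else 0) = f i z := by
  let T : ∀ j, Finset (X j) := Function.update (fun _ => univ) i {z}
  have hT : ∀ j, ∑ v ∈ T j, f j v = if j = i then f i z else 1 := by
    intro j
    by_cases hj : j = i
    · subst hj; simp [T]
    · simp [T, hj, hf]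
  calc ∑ x : ∀ j, X j, (if x i = z then ∏ j, f j (x j) else 0)
      = ∑ x ∈ Fintype.piFinset T, ∏ j, f j (x j) := by
        rw [← sum_filter]
        congr 1
        ext x
        simp only [mem_filter, mem_univ, true_and, Fintype.mem_piFinset]
        constructor
        · intro hx j
          by_cases hj : j = i
          · subst hj; simp [T, hx]
          · simp [T, hj]
        · intro hx
          simpa [T] using hx i
    _ = f i z := by rw [← prod_univ_sum]; simp [hT]

noncomputable def condMIRatio {Ω A B D : Type*} [Fintype Ω]
    (q : Ω → ℝ) (f : Ω → A) (g : Ω → B) (h : Ω → D) (ω : Ω) : ℝ :=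
  (prOf q {ω' | f ω' = f ω ∧ g ω' = g ω ∧ h ω' = h ω} * prOf q {ω' | h ω' = h ω}) /
    (prOf q {ω' | f ω' = f ω ∧ h ω' = h ω} * prOf q {ω' | g ω' = g ω ∧ h ω' = h ω})

lemma condMI_eq_sum_mul_log_condMIRatio {Ω A B D : Type*} [Fintype Ω]
    (q : Ω → ℝ) (f : Ω → A) (g : Ω → B) (h : Ω → D) :
    condMI q f g h = ∑ ω, q ω * log (condMIRatio q f g h ω) := rfl

section condIndep
variable {W C : Type*} {n : ℕ} {Y : Fin n → Type*}
  [Fintype W] [Fintype C] [∀ t, Fintype (Y t)] (q : W × (∀ t, Y t) × C → ℝ)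

/-- `q(w, y) / q(w) = ∏ₜ q(w, yₜ) / q(w)`, with the denominators cleared. -/
def CondIndepCoordsGivenFst : Prop :=
  ∀ w y, prOf q {ω | ω.2.1 = y ∧ ω.1 = w} * prOf q {ω | ω.1 = w} ^ n =
    prOf q {ω | ω.1 = w} * ∏ t, prOf q {ω | ω.2.1 t = y t ∧ ω.1 = w}

/-- `q(w, c) ∏ₜ q(yₜ | w, c)`. -/
noncomputable def condIndepProduct (ω : W × (∀ t, Y t) × C) : ℝ :=
  prOf q {ω' | ω'.2.2 = ω.2.2 ∧ ω'.1 = ω.1} *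
    ∏ t, prOf q {ω' | ω'.2.2 = ω.2.2 ∧ ω'.2.1 t = ω.2.1 t ∧ ω'.1 = ω.1} /
      prOf q {ω' | ω'.2.2 = ω.2.2 ∧ ω'.1 = ω.1}

variable {q}

lemma condIndepProduct_nonneg (hq : ∀ ω, 0 ≤ q ω) (ω) : 0 ≤ condIndepProduct q ω :=
  mul_nonneg (prOf_nonneg hq _) <| prod_nonneg fun _ _ =>
    div_nonneg (prOf_nonneg hq _) (prOf_nonneg hq _)

lemma condIndepProduct_pos (hq : ∀ ω, 0 ≤ q ω) {ω} (hω : 0 < q ω) :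
    0 < condIndepProduct q ω :=
  mul_pos (prOf_pos_of_mem hq (by simp) hω) <| prod_pos fun _ _ =>
    div_pos (prOf_pos_of_mem hq (by simp) hω) (prOf_pos_of_mem hq (by simp) hω)

lemma sum_condIndepProduct : ∑ ω, condIndepProduct q ω = ∑ ω, q ω := by
  set P : W → C → ℝ := fun w c => prOf q {ω' | ω'.2.2 = c ∧ ω'.1 = w}
  set M : ∀ t, W → Y t → C → ℝ := fun t w z c =>
    prOf q {ω' | ω'.2.2 = c ∧ ω'.2.1 t = z ∧ ω'.1 = w}
  have hM : ∀ t w c, ∑ z, M t w z c = P w c := fun t w c =>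
    sum_prOf_fiber (fun ω => ω.2.1 t) fun _ _ => by simp only [Set.mem_ofPred_eq]; tauto
  have hP : ∀ w, ∑ c, P w c = prOf q {ω' | ω'.1 = w} := fun w =>
    sum_prOf_fiber (fun ω => ω.2.2) fun _ _ => by simp only [Set.mem_ofPred_eq]
  have hslice : ∀ w c, ∑ y : ∀ t, Y t, P w c * ∏ t, M t w (y t) c / P w c = P w c := by
    intro w c
    rw [← mul_sum, ← Fintype.prod_sum fun t z => M t w z c / P w c]
    simp only [← sum_div, hM, prod_const, card_univ, Fintype.card_fin]
    rcases eq_or_ne (P w c) 0 with h | h <;> simp [h]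
  calc ∑ ω, condIndepProduct q ω
      = ∑ w, ∑ c, ∑ y : ∀ t, Y t, P w c * ∏ t, M t w (y t) c / P w c := by
        simp only [Fintype.sum_prod_type]
        exact sum_congr rfl fun w _ => sum_comm
    _ = ∑ ω, q ω := by
        simp only [hslice, hP]
        rw [← prOf_univ (q := q)]
        exact sum_prOf_fiber Prod.fst fun _ _ => by simp

lemma log_div_condIndepProduct (hq : ∀ ω, 0 ≤ q ω) (hci : CondIndepCoordsGivenFst q)
    {ω : W × (∀ t, Y t) × C} (hω : 0 < q ω) :
    log (q ω / condIndepProduct q ω) =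
      log (condMIRatio q (fun ω => ω.2.2) (fun ω => ω.2.1) (fun ω => ω.1) ω) -
        ∑ t, log (condMIRatio q (fun ω => ω.2.2) (fun ω => ω.2.1 t) (fun ω => ω.1) ω) := by
  obtain ⟨w, y, c⟩ := ω
  have hpos : ∀ {s : Set (W × (∀ t, Y t) × C)}, (w, y, c) ∈ s → 0 < prOf q s :=
    fun h => prOf_pos_of_mem hq h hω
  have hsingle :
      {ω' : W × (∀ t, Y t) × C | ω'.2.2 = c ∧ ω'.2.1 = y ∧ ω'.1 = w} = {(w, y, c)} := by
    ext ω'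
    simp only [Set.mem_ofPred_eq, Set.mem_singleton_iff, Prod.ext_iff]
    tauto
  simp only [condMIRatio, condIndepProduct, hsingle, prOf_singleton]
  set P := prOf q {ω' | ω'.2.2 = c ∧ ω'.1 = w}
  set Qw := prOf q {ω' | ω'.1 = w}
  set Qwy := prOf q {ω' | ω'.2.1 = y ∧ ω'.1 = w}
  set M : Fin n → ℝ := fun t => prOf q {ω' | ω'.2.2 = c ∧ ω'.2.1 t = y t ∧ ω'.1 = w}
  set Qt : Fin n → ℝ := fun t => prOf q {ω' | ω'.2.1 t = y t ∧ ω'.1 = w}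
  have hP : 0 < P := hpos (by simp)
  have hQw : 0 < Qw := hpos (by simp)
  have hQwy : 0 < Qwy := hpos (by simp)
  have hM : ∀ t, 0 < M t := fun t => hpos (by simp)
  have hQt : ∀ t, 0 < Qt t := fun t => hpos (by simp)
  have hci' : Qwy * Qw ^ n = Qw * ∏ t, Qt t := hci w y
  have hMP : 0 < ∏ t, M t / P := prod_pos fun t _ => div_pos (hM t) hP
  have hB : ∀ t, 0 < M t * Qw / (P * Qt t) := fun t =>
    div_pos (mul_pos (hM t) hQw) (mul_pos hP (hQt t))
  have key : q (w, y, c) * Qw / (P * Qwy) =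
      q (w, y, c) / (P * ∏ t, M t / P) * ∏ t, M t * Qw / (P * Qt t) := by
    have hprod : ∏ t, M t * Qw / (P * Qt t) = (∏ t, M t / P) * (Qw ^ n / ∏ t, Qt t) := by
      rw [← Fin.prod_const n Qw, ← prod_div_distrib, ← prod_mul_distrib]
      exact prod_congr (by simp) fun t _ => by field_simp
    have hQt' : 0 < ∏ t, Qt t := prod_pos fun t _ => hQt t
    rw [hprod]
    field_simp
    exact hci'.symm
  rw [key, log_mul (div_pos hω (mul_pos hP hMP)).ne' (prod_pos fun t _ => hB t).ne',
    log_prod fun t _ => (hB t).ne']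
  ring

theorem sum_condMI_le_condMI_of_condIndep (hq : ∀ ω, 0 ≤ q ω)
    (hci : CondIndepCoordsGivenFst q) :
    ∑ t, condMI q (fun ω => ω.2.2) (fun ω => ω.2.1 t) (fun ω => ω.1) ≤
      condMI q (fun ω => ω.2.2) (fun ω => ω.2.1) (fun ω => ω.1) := by
  have hdiff : condMI q (fun ω => ω.2.2) (fun ω => ω.2.1) (fun ω => ω.1) -
      ∑ t, condMI q (fun ω => ω.2.2) (fun ω => ω.2.1 t) (fun ω => ω.1) =
      ∑ ω, q ω * log (q ω / condIndepProduct q ω) := by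
    simp only [condMI_eq_sum_mul_log_condMIRatio]
    rw [sum_comm, ← sum_sub_distrib]
    refine sum_congr rfl fun ω _ => ?_
    rcases (hq ω).eq_or_lt with h | h
    · simp [← h]
    · rw [log_div_condIndepProduct hq hci h, ← mul_sum, mul_sub]
  have := sum_mul_log_div_nonneg hq (condIndepProduct_nonneg hq)
    (fun _ => condIndepProduct_pos hq) sum_condIndepProduct
  linarith

lemma condIndepCoordsGivenFst_of_eq_mul_prod_mul {μ : W → ℝ} {κ : ∀ t, W → Y t → ℝ}
    {ν : W → (∀ t, Y t) → C → ℝ} (hκ1 : ∀ t w, ∑ y, κ t w y = 1)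
    (hν1 : ∀ w y, ∑ c, ν w y c = 1)
    (hq : ∀ w y c, q (w, y, c) = μ w * (∏ t, κ t w (y t)) * ν w y c) :
    CondIndepCoordsGivenFst q := by
  have hslice : ∀ w y, ∑ c, q (w, y, c) = μ w * ∏ t, κ t w (y t) := fun w y => by
    simp only [hq, ← mul_sum, hν1, mul_one]
  have hW : ∀ w, prOf q {ω | ω.1 = w} = μ w := fun w => by
    rw [prOf_setOf_fst q (· = w), sum_ite_eq', if_pos (mem_univ w), Fintype.sum_prod_type]
    simp only [hslice, ← mul_sum, ← Fintype.prod_sum, hκ1, prod_const_one, mul_one]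
  have hWY : ∀ w y, prOf q {ω | ω.2.1 = y ∧ ω.1 = w} = μ w * ∏ t, κ t w (y t) := fun w y => by
    rw [prOf_setOf_and_fst_eq q (fun z => z.1 = y) w, prOf_setOf_fst _ (· = y)]
    simp [hslice]
  have hWYt : ∀ w t z, prOf q {ω | ω.2.1 t = z ∧ ω.1 = w} = μ w * κ t w z := fun w t z => by
    rw [prOf_setOf_and_fst_eq q (fun x => x.1 t = z) w,
      prOf_setOf_fst _ (fun y : ∀ s, Y s => y t = z),
      ← sum_pi_ite_apply_eq_of_sum_eq_one (fun t => hκ1 t w) t z, mul_sum]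
    simp only [hslice, mul_ite, mul_zero]
  intro w y
  simp only [hW, hWY, hWYt, prod_mul_distrib, Fin.prod_const]
  ring

end condIndep

theorem stmt17_general {Wt C : Type*} (n : ℕ) (Y : Fin n → Type*)
    [Fintype Wt] [Fintype C] [∀ t, Fintype (Y t)]
    (μ : Wt → ℝ) (hμ0 : ∀ w, 0 ≤ μ w)
    (κ : ∀ t, Wt → Y t → ℝ) (hκ0 : ∀ t w y, 0 ≤ κ t w y) (hκ1 : ∀ t w, ∑ y, κ t w y = 1)
    (ν : Wt → (∀ t, Y t) → C → ℝ)
    (hν0 : ∀ w y c, 0 ≤ ν w y c) (hν1 : ∀ w y, ∑ c, ν w y c = 1)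
    (q : Wt × (∀ t, Y t) × C → ℝ)
    (hq : ∀ w y c, q (w, y, c) = μ w * (∏ t, κ t w (y t)) * ν w y c) :
    (∑ t, condMI q (fun ω => ω.2.2) (fun ω => ω.2.1 t) (fun ω => ω.1)) ≤
      condMI q (fun ω => ω.2.2) (fun ω => ω.2.1) (fun ω => ω.1) := by
  have hq0 : ∀ ω, 0 ≤ q ω := fun ⟨w, y, c⟩ => by
    rw [hq]
    exact mul_nonneg (mul_nonneg (hμ0 w) (prod_nonneg fun t _ => hκ0 t w (y t))) (hν0 w y c)
  exact sum_condMI_le_condMI_of_condIndep hq0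
    (condIndepCoordsGivenFst_of_eq_mul_prod_mul hκ1 hν1 hq)

/-- if `Y₁, …, Yₙ` are conditionally independent given `W` under
the joint pmf `q(w,y,c) = μ(w) ∏ t κ_t(y_t|w) ν(c|w,y)`, then
`I(C; (Y₁,…,Yₙ) | W) ≥ ∑ t, I(C; Y_t | W)`. -/
theorem stmt17 {Wt C : Type*} (n : ℕ) (Y : Fin n → Type*)
    [Fintype Wt] [Fintype C] [∀ t, Fintype (Y t)]
    [Nonempty Wt] [Nonempty C] [∀ t, Nonempty (Y t)]
    (μ : Wt → ℝ) (hμ0 : ∀ w, 0 ≤ μ w) (hμ1 : ∑ w, μ w = 1)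
    (κ : ∀ t, Wt → Y t → ℝ) (hκ0 : ∀ t w y, 0 ≤ κ t w y) (hκ1 : ∀ t w, ∑ y, κ t w y = 1)
    (ν : Wt → (∀ t, Y t) → C → ℝ)
    (hν0 : ∀ w y c, 0 ≤ ν w y c) (hν1 : ∀ w y, ∑ c, ν w y c = 1)
    (q : Wt × (∀ t, Y t) × C → ℝ)
    (hq : ∀ w y c, q (w, y, c) = μ w * (∏ t, κ t w (y t)) * ν w y c) :
    (∑ t, condMI q (fun ω => ω.2.2) (fun ω => ω.2.1 t) (fun ω => ω.1)) ≤
      condMI q (fun ω => ω.2.2) (fun ω => ω.2.1) (fun ω => ω.1) :=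
  stmt17_general n Y μ hμ0 κ hκ0 hκ1 ν hν0 hν1 q hq
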